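/- Let V : ℝ⁴ → ℝ⁴ be the vector field V(x₀,x₁,x₂,x₃) = (x₁, −x₀, x₃, −x₂), for x ∈ S³ let g_x(X,Y) = ⟨X,Y⟩ − 2⟨X,V(x)⟩⟨Y,V(x)⟩, and for 0 < r ≤ 1 let γ_r(θ) = (r cos θ, r sin θ, 0, √(1−r²)). Then the closed curve γ_r is timelike (g_{γ_r(θ)}(γ_r′(θ), γ_r′(θ)) < 0 for all θ) if and only if r > √2/2; it is null (the norm is 0 for all θ) if and only if r = √2/2; and it is spacelike (the norm is positive for all θ) if and only if r < √2/2. In particular, as the closed timelike curve γ_1 is contracted by lowering r, it becomes null at r = √2/2 and then spacelike. -/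

import Mathlib

open Real
open scoped RealInnerProductSpace

/-- The vector field `V(x₀,x₁,x₂,x₃) = (x₁, −x₀, x₃, −x₂)` on Euclidean 4-space. -/
noncomputable def V : EuclideanSpace ℝ (Fin 4) → EuclideanSpace ℝ (Fin 4) :=
  fun x => (EuclideanSpace.equiv (Fin 4) ℝ).symm ![x 1, -x 0, x 3, -x 2]

/-- The Lorentzian form `g_x(X,Y) = ⟨X,Y⟩ − 2⟨X,V(x)⟩⟨Y,V(x)⟩`. -/
noncomputable def g (x X Y : EuclideanSpace ℝ (Fin 4)) : ℝ :=
  ⟪X, Y⟫ - 2 * ⟪X, V x⟫ * ⟪Y, V x⟫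

/-- The curve `γ_r(θ) = (r cos θ, r sin θ, 0, √(1−r²))` in Euclidean 4-space. -/
noncomputable def γ (r θ : ℝ) : EuclideanSpace ℝ (Fin 4) :=
  (EuclideanSpace.equiv (Fin 4) ℝ).symm ![r * cos θ, r * sin θ, 0, Real.sqrt (1 - r ^ 2)]

/-- The velocity `γ_r′(θ) = (−r sin θ, r cos θ, 0, 0)`. -/
noncomputable def γ' (r θ : ℝ) : EuclideanSpace ℝ (Fin 4) :=
  (EuclideanSpace.equiv (Fin 4) ℝ).symm ![-(r * sin θ), r * cos θ, 0, 0]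

lemma g_val (r θ : ℝ) : g (γ r θ) (γ' r θ) (γ' r θ) = r ^ 2 * (1 - 2 * r ^ 2) := by
  have hs := sin_sq_add_cos_sq θ
  simp only [g, γ, γ', V, PiLp.inner_apply, Fin.sum_univ_four]
  simp [mul_pow, sq_abs]
  linear_combination (r ^ 2 - 2 * r ^ 4 * (sin θ ^ 2 + cos θ ^ 2 + 1)) * hs

lemma sqrt2_lt (r : ℝ) (hr0 : 0 < r) : Real.sqrt 2 / 2 < r ↔ 1 - 2 * r ^ 2 < 0 := by
  have h2 : (Real.sqrt 2) ^ 2 = 2 := Real.sq_sqrt (by norm_num)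
  have hpos : (0:ℝ) < Real.sqrt 2 := Real.sqrt_pos.2 (by norm_num)
  constructor
  · intro h; nlinarith
  · intro h; nlinarith

lemma sqrt2_eq (r : ℝ) (hr0 : 0 < r) : r = Real.sqrt 2 / 2 ↔ 1 - 2 * r ^ 2 = 0 := by
  have h2 : (Real.sqrt 2) ^ 2 = 2 := Real.sq_sqrt (by norm_num)
  have hpos : (0:ℝ) < Real.sqrt 2 := Real.sqrt_pos.2 (by norm_num)
  constructor
  · intro h; subst h; nlinarith
  · intro h; nlinarith [sq_nonneg (r - Real.sqrt 2 / 2), sq_nonneg (r + Real.sqrt 2 / 2)]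

/-- For `0 < r ≤ 1`, the closed curve `γ_r` is timelike iff `r > √2/2`, null iff
`r = √2/2`, and spacelike iff `r < √2/2`.  So contracting the CTC `γ_1` by
lowering `r`, it becomes null at `r = √2/2` and then spacelike. -/
theorem γ_causal_character (r : ℝ) (hr0 : 0 < r) (hr1 : r ≤ 1) :
    ((∀ θ : ℝ, g (γ r θ) (γ' r θ) (γ' r θ) < 0) ↔ Real.sqrt 2 / 2 < r) ∧
    ((∀ θ : ℝ, g (γ r θ) (γ' r θ) (γ' r θ) = 0) ↔ r = Real.sqrt 2 / 2) ∧
    ((∀ θ : ℝ, 0 < g (γ r θ) (γ' r θ) (γ' r θ)) ↔ r < Real.sqrt 2 / 2) := by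
  have hr2 : (0:ℝ) < r ^ 2 := by positivity
  simp only [g_val]
  have h2 : (Real.sqrt 2) ^ 2 = 2 := Real.sq_sqrt (by norm_num)
  have hpos : (0:ℝ) < Real.sqrt 2 := Real.sqrt_pos.2 (by norm_num)
  refine ⟨⟨fun h => ?_, fun h θ => ?_⟩, ⟨fun h => ?_, fun h θ => ?_⟩, ⟨fun h => ?_, fun h θ => ?_⟩⟩
  · have := h 0; rw [sqrt2_lt r hr0]; nlinarith
  · rw [sqrt2_lt r hr0] at h; nlinarith
  · have := h 0
    have h1 : 1 - 2 * r ^ 2 = 0 := by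
      rcases mul_eq_zero.1 this with h' | h'
      · exact absurd h' (by positivity)
      · exact h'
    exact (sqrt2_eq r hr0).2 h1
  · rw [sqrt2_eq r hr0] at h; rw [h]; ring
  · have := h 0
    have h1 : 0 < 1 - 2 * r ^ 2 := by
      by_contra h'
      push_neg at h'
      nlinarith [mul_nonneg hr2.le (neg_nonneg.2 h')]
    nlinarith
  · have h1 : 0 < 1 - 2 * r ^ 2 := by nlinarith
    positivity
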